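/- arXiv:1803.10998 — 2 statements merged into one kernel-verified Lean document; each statement's English description precedes it below -/
import Mathlib

section
/- Conditionally Variational approximation (CVA) optimality: fix a conditional density f̃*(θ_{\k}|θ_k). Among all joint densities f̃ = f̃*(θ_{\k}|θ_k) f̃_k(θ_k) with free marginal f̃_k, the KL divergence KL(f̃‖f) is minimized by f̃*_k(θ_k) ∝ f_k(θ_k) · exp(−KL(f̃*(·|θ_k) ‖ f(·|θ_k))), and the minimum value equals −log ζ_k where ζ_k is the normalizing constant of f̃*_k. -/
/-!
Since `f(a, b) = f_k(a) f(b | a)`, the chain rule for the KL divergence turns the objective for the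
joint `f̃*(b | a) g(a)` into `∫ g log (g / w)` with `w(a) = f_k(a) exp (-KL(f̃*(·|a) ‖ f(·|a)))`,
a positive weight of total mass `ζ`. Gibbs' inequality `t - s ≤ t log (t / s)`, applied with
`s = w / ζ`, bounds this below by `-log ζ`, and `g = w / ζ` attains the bound.
-/

open MeasureTheory Real

namespace Real

lemma sub_le_mul_log_div {t s : ℝ} (ht : 0 ≤ t) (hs : 0 < s) : t - s ≤ t * log (t / s) := by
  rcases ht.eq_or_lt with rfl | ht
  · simpa using hs.le
  · have h := one_sub_inv_le_log_of_pos (div_pos ht hs)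
    rw [inv_div] at h
    calc t - s = t * (1 - s / t) := by field_simp
      _ ≤ t * log (t / s) := mul_le_mul_of_nonneg_left h ht.le

lemma mul_mul_log_mul_div_mul {p q c d : ℝ} (hp : p ≠ 0) (hq : q ≠ 0) (hd : d ≠ 0) :
    p * c * log (p * c / (q * d)) = c * (p * log (p / q)) + c * log (c / d) * p := by
  rcases eq_or_ne c 0 with rfl | hc
  · simp
  · rw [mul_div_mul_comm, log_mul (div_ne_zero hp hq) (div_ne_zero hc hd)]
    ring

end Real

section ChainRule

variable {A B : Type*} [MeasurableSpace A] [MeasurableSpace B] {μ : Measure A} {ν : Measure B}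

lemma integral_mul_mul_log_mul_div_mul {p q : B → ℝ} {c d : ℝ} (hp : ∀ b, p b ≠ 0)
    (hq : ∀ b, q b ≠ 0) (hd : d ≠ 0) (hp1 : ∫ b, p b ∂ν = 1)
    (hint : Integrable (fun b => p b * c * log (p b * c / (q b * d))) ν) :
    ∫ b, p b * c * log (p b * c / (q b * d)) ∂ν
      = c * (log (c / d) + ∫ b, p b * log (p b / q b) ∂ν) := by
  rcases eq_or_ne c 0 with rfl | hc
  · simp
  have hpi : Integrable p ν := Integrable.of_integral_ne_zero (by simp [hp1])
  simp_rw [mul_mul_log_mul_div_mul (hp _) (hq _) hd] at hint ⊢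
  have hKL : Integrable (fun b => p b * log (p b / q b)) ν := by
    have := (hint.sub (hpi.const_mul (c * log (c / d)))).const_mul c⁻¹
    refine this.congr (ae_of_all _ fun b => ?_)
    simp only [Pi.sub_apply]
    field_simp
    ring
  rw [integral_add (hKL.const_mul c) (hpi.const_mul _), integral_const_mul, integral_const_mul, hp1]
  ring

variable [SFinite μ] [SFinite ν] {f : A × B → ℝ} {p q : A → B → ℝ} {d g : A → ℝ}

lemma ae_integral_mul_log_div_eq (hf : ∀ a b, f (a, b) = q a b * d a) (hp : ∀ a b, p a b ≠ 0)
    (hq : ∀ a b, q a b ≠ 0) (hd : ∀ a, d a ≠ 0) (hp1 : ∀ a, ∫ b, p a b ∂ν = 1)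
    (hint : Integrable (fun x : A × B => p x.1 x.2 * g x.1 * log (p x.1 x.2 * g x.1 / f x))
      (μ.prod ν)) :
    ∀ᵐ a ∂μ, ∫ b, p a b * g a * log (p a b * g a / f (a, b)) ∂ν
      = g a * log (g a / (d a * exp (-∫ b, p a b * log (p a b / q a b) ∂ν))) := by
  filter_upwards [hint.prod_right_ae] with a ha
  simp only [hf] at ha ⊢
  rw [integral_mul_mul_log_mul_div_mul (hp a) (hq a) (hd a) (hp1 a) ha]
  rcases eq_or_ne (g a) 0 with hg | hg
  · simp [hg]
  · rw [log_div hg (mul_ne_zero (hd a) (exp_ne_zero _)), log_mul (hd a) (exp_ne_zero _), log_exp,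
      log_div hg (hd a)]
    ring

theorem integral_prod_mul_log_div_eq (hf : ∀ a b, f (a, b) = q a b * d a)
    (hp : ∀ a b, p a b ≠ 0) (hq : ∀ a b, q a b ≠ 0) (hd : ∀ a, d a ≠ 0)
    (hp1 : ∀ a, ∫ b, p a b ∂ν = 1)
    (hint : Integrable (fun x : A × B => p x.1 x.2 * g x.1 * log (p x.1 x.2 * g x.1 / f x))
      (μ.prod ν)) :
    Integrable (fun a => g a * log (g a / (d a * exp (-∫ b, p a b * log (p a b / q a b) ∂ν)))) μ ∧
    ∫ x : A × B, p x.1 x.2 * g x.1 * log (p x.1 x.2 * g x.1 / f x) ∂(μ.prod ν)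
      = ∫ a, g a * log (g a / (d a * exp (-∫ b, p a b * log (p a b / q a b) ∂ν))) ∂μ := by
  have h := ae_integral_mul_log_div_eq hf hp hq hd hp1 hint
  exact ⟨hint.integral_prod_left.congr h, (integral_prod _ hint).trans (integral_congr_ae h)⟩

end ChainRule

section GibbsVariational

variable {α : Type*} [MeasurableSpace α] {μ : Measure α} {w : α → ℝ}

lemma neg_log_integral_le_integral_mul_log_div (hw : ∀ a, 0 < w a) (hZ : 0 < ∫ a, w a ∂μ)
    {g : α → ℝ} (hg : ∀ a, 0 ≤ g a) (hg1 : ∫ a, g a ∂μ = 1)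
    (hint : Integrable (fun a => g a * log (g a / w a)) μ) :
    -log (∫ a, w a ∂μ) ≤ ∫ a, g a * log (g a / w a) ∂μ := by
  set Z := ∫ a, w a ∂μ
  have hwi : Integrable w μ := Integrable.of_integral_ne_zero hZ.ne'
  have hgi : Integrable g μ := Integrable.of_integral_ne_zero (by simp [hg1])
  have hpt : ∀ a, g a - w a / Z - g a * log Z ≤ g a * log (g a / w a) := fun a => by
    have h := sub_le_mul_log_div (hg a) (div_pos (hw a) hZ)
    rcases (hg a).eq_or_lt with hg0 | hg0
    · simp [← hg0, div_nonneg (hw a).le hZ.le]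
    · rw [div_div_eq_mul_div, log_div (mul_ne_zero hg0.ne' hZ.ne') (hw a).ne',
        log_mul hg0.ne' hZ.ne'] at h
      rw [log_div hg0.ne' (hw a).ne']
      linear_combination h
  have hwZ : Integrable (fun a => w a / Z) μ := hwi.div_const Z
  have hgwZ : Integrable (fun a => g a - w a / Z) μ := hgi.sub hwZ
  calc -log Z = ∫ a, (g a - w a / Z - g a * log Z) ∂μ := by
        rw [integral_sub hgwZ (hgi.mul_const _), integral_sub hgi hwZ, integral_div,
          integral_mul_const, hg1, div_self hZ.ne']
        ring
    _ ≤ _ := integral_mono (by fun_prop) hint hpt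

lemma integral_div_mul_log_div_div (hw : ∀ a, 0 < w a) (hZ : 0 < ∫ a, w a ∂μ) :
    ∫ a, w a / (∫ a, w a ∂μ) * log (w a / (∫ a, w a ∂μ) / w a) ∂μ = -log (∫ a, w a ∂μ) := by
  have hw' : ∀ a, w a / (∫ a, w a ∂μ) / w a = (∫ a, w a ∂μ)⁻¹ := fun a => by
    field_simp [(hw a).ne']
  simp_rw [hw', log_inv, integral_mul_const, integral_div, div_self hZ.ne', one_mul]

end GibbsVariational

theorem cva_optimality_general {A B : Type*} [MeasurableSpace A] [MeasurableSpace B]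
    (μ : Measure A) (ν : Measure B) [SigmaFinite μ] [SigmaFinite ν]
    (f : A × B → ℝ) (fk : A → ℝ) (fc : A → B → ℝ) (ftc : A → B → ℝ)
    (hf_pos : ∀ x, 0 < f x) (hfk_pos : ∀ a, 0 < fk a)
    (hfc : ∀ a b, fc a b = f (a, b) / fk a)
    (hftc_pos : ∀ a b, 0 < ftc a b) (hftc_int : ∀ a, ∫ b, ftc a b ∂ν = 1)
    (KLc : A → ℝ)
    (hKLc : ∀ a, KLc a = ∫ b, ftc a b * Real.log (ftc a b / fc a b) ∂ν)
    (ζ : ℝ) (hζ : ζ = ∫ a, fk a * Real.exp (-(KLc a)) ∂μ) (hζ_pos : 0 < ζ)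
    (ftkstar : A → ℝ) (hstar : ∀ a, ftkstar a = fk a * Real.exp (-(KLc a)) / ζ)
    (hint_star : Integrable (fun x : A × B => ftc x.1 x.2 * ftkstar x.1 *
        Real.log (ftc x.1 x.2 * ftkstar x.1 / f x)) (μ.prod ν)) :
    (∫ x : A × B, ftc x.1 x.2 * ftkstar x.1 *
        Real.log (ftc x.1 x.2 * ftkstar x.1 / f x) ∂(μ.prod ν))
      = -Real.log ζ ∧
    ∀ ftk : A → ℝ, (∀ a, 0 ≤ ftk a) → (∫ a, ftk a ∂μ = 1) →
      Integrable (fun x : A × B => ftc x.1 x.2 * ftk x.1 *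
          Real.log (ftc x.1 x.2 * ftk x.1 / f x)) (μ.prod ν) →
      -Real.log ζ ≤ ∫ x : A × B, ftc x.1 x.2 * ftk x.1 *
          Real.log (ftc x.1 x.2 * ftk x.1 / f x) ∂(μ.prod ν) := by
  have hf : ∀ a b, f (a, b) = fc a b * fk a := fun a b => by
    rw [hfc, div_mul_cancel₀ _ (hfk_pos a).ne']
  have hfc_ne : ∀ a b, fc a b ≠ 0 := fun a b => by
    rw [hfc]; exact (div_pos (hf_pos _) (hfk_pos a)).ne'
  have hw : ∀ a, 0 < fk a * exp (-KLc a) := fun a => mul_pos (hfk_pos a) (exp_pos _)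
  have hchain : ∀ g : A → ℝ, Integrable (fun x : A × B => ftc x.1 x.2 * g x.1 *
      log (ftc x.1 x.2 * g x.1 / f x)) (μ.prod ν) →
      Integrable (fun a => g a * log (g a / (fk a * exp (-KLc a)))) μ ∧
      ∫ x : A × B, ftc x.1 x.2 * g x.1 * log (ftc x.1 x.2 * g x.1 / f x) ∂(μ.prod ν)
        = ∫ a, g a * log (g a / (fk a * exp (-KLc a))) ∂μ := fun g hint => by
    simpa only [← hKLc] using integral_prod_mul_log_div_eq hf (fun a b => (hftc_pos a b).ne')
      hfc_ne (fun a => (hfk_pos a).ne') hftc_int hint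
  subst hζ
  refine ⟨?_, fun g hg hg1 hint => ?_⟩
  · rw [(hchain _ hint_star).2]
    simp only [hstar]
    exact integral_div_mul_log_div_div hw hζ_pos
  · obtain ⟨hint_marg, heq⟩ := hchain g hint
    rw [heq]
    exact neg_log_integral_le_integral_mul_log_div hw hζ_pos hg hg1 hint_marg

/-- Conditionally Variational approximation (CVA) optimality: with the
conditional `f̃*(θ_{\k}|θ_k)` fixed, the marginal
`f̃*_k(θ_k) = f_k(θ_k) exp(−KL(f̃*(·|θ_k)‖f(·|θ_k))) / ζ_k` attains
KL divergence `−log ζ_k` to the true joint `f`, and every other free-form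
marginal gives a KL divergence at least `−log ζ_k`. -/
theorem cva_optimality {A B : Type*} [MeasurableSpace A] [MeasurableSpace B]
    (μ : Measure A) (ν : Measure B) [SigmaFinite μ] [SigmaFinite ν]
    (f : A × B → ℝ) (fk : A → ℝ) (fc : A → B → ℝ) (ftc : A → B → ℝ)
    (hf_pos : ∀ x, 0 < f x) (hfk_pos : ∀ a, 0 < fk a)
    (hfk : ∀ a, fk a = ∫ b, f (a, b) ∂ν)
    (hfc : ∀ a b, fc a b = f (a, b) / fk a)
    (hftc_pos : ∀ a b, 0 < ftc a b) (hftc_int : ∀ a, ∫ b, ftc a b ∂ν = 1)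
    (KLc : A → ℝ)
    (hKLc : ∀ a, KLc a = ∫ b, ftc a b * Real.log (ftc a b / fc a b) ∂ν)
    (ζ : ℝ) (hζ : ζ = ∫ a, fk a * Real.exp (-(KLc a)) ∂μ) (hζ_pos : 0 < ζ)
    (ftkstar : A → ℝ) (hstar : ∀ a, ftkstar a = fk a * Real.exp (-(KLc a)) / ζ)
    (hint_star : Integrable (fun x : A × B => ftc x.1 x.2 * ftkstar x.1 *
        Real.log (ftc x.1 x.2 * ftkstar x.1 / f x)) (μ.prod ν)) :
    (∫ x : A × B, ftc x.1 x.2 * ftkstar x.1 *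
        Real.log (ftc x.1 x.2 * ftkstar x.1 / f x) ∂(μ.prod ν))
      = -Real.log ζ ∧
    ∀ ftk : A → ℝ, (∀ a, 0 ≤ ftk a) → (∫ a, ftk a ∂μ = 1) →
      Integrable (fun x : A × B => ftc x.1 x.2 * ftk x.1 *
          Real.log (ftc x.1 x.2 * ftk x.1 / f x)) (μ.prod ν) →
      -Real.log ζ ≤ ∫ x : A × B, ftc x.1 x.2 * ftk x.1 *
          Real.log (ftc x.1 x.2 * ftk x.1 / f x) ∂(μ.prod ν) :=
  cva_optimality_general μ ν f fk fc ftc hf_pos hfk_pos hfc hftc_pos hftc_int KLc hKLc ζ hζ hζ_pos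
    ftkstar hstar hint_star
end

section
/- Pythagorean decomposition for CVA: with the notation above, for any marginal f̃_k, KL(f̃*(·|·)f̃_k ‖ f) = KL(f̃_k ‖ f̃*_k) + log(1/ζ_k), where f̃*_k(θ_k) = (1/ζ_k) f_k(θ_k) exp(−KL(f̃*(·|θ_k) ‖ f(·|θ_k))) and ζ_k is its normalizing constant. In particular KL(f̃‖f) ≥ log(1/ζ_k) with equality iff f̃_k = f̃*_k. -/
/-!
Writing `f(θ_k, θ_{\k}) = f(θ_{\k} | θ_k) f_k(θ_k)`, the log-ratio `log (f̃* f̃_k / f)` splits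
into the conditional part `log (f̃* / f(·|θ_k))` and the marginal part `log (f̃_k / f_k)`.
Integrating out `θ_{\k}` against the probability density `f̃*(·|θ_k)` leaves
`f̃_k (KL_c + log (f̃_k / f_k))`, which by the definition of `f̃*_k` equals
`f̃_k log (f̃_k / f̃*_k) - f̃_k log ζ_k`. The inequality and its equality case are Gibbs' inequality
for the two probability densities `f̃_k` and `f̃*_k`, in the form
`p log (p / q) - (p - q) = q · klFun (p / q) ≥ 0`, with equality iff `p = q`.
-/

open MeasureTheory Real InformationTheory

section Gibbs

variable {α : Type*} [MeasurableSpace α] {μ : Measure α} {p q : α → ℝ}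

lemma mul_klFun_div {x y : ℝ} (hy : y ≠ 0) :
    y * klFun (x / y) = x * log (x / y) - (x - y) := by
  rw [klFun_apply]
  field_simp
  ring

lemma integral_mul_log_div_eq_integral_mul_klFun (hq : ∀ a, q a ≠ 0)
    (hp_int : Integrable p μ) (hq_int : Integrable q μ)
    (hpq : ∫ a, p a ∂μ = ∫ a, q a ∂μ)
    (hlog_int : Integrable (fun a => p a * log (p a / q a)) μ) :
    ∫ a, p a * log (p a / q a) ∂μ = ∫ a, q a * klFun (p a / q a) ∂μ := by
  simp_rw [mul_klFun_div (hq _)]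
  have hsub_int : Integrable (fun a => p a - q a) μ := hp_int.sub hq_int
  rw [integral_sub hlog_int hsub_int, integral_sub hp_int hq_int, hpq, sub_self, sub_zero]

lemma integral_mul_log_div_nonneg (hp : ∀ a, 0 ≤ p a) (hq : ∀ a, 0 < q a)
    (hp_int : Integrable p μ) (hq_int : Integrable q μ)
    (hpq : ∫ a, p a ∂μ = ∫ a, q a ∂μ)
    (hlog_int : Integrable (fun a => p a * log (p a / q a)) μ) :
    0 ≤ ∫ a, p a * log (p a / q a) ∂μ := by
  rw [integral_mul_log_div_eq_integral_mul_klFun (fun a => (hq a).ne') hp_int hq_int hpq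
    hlog_int]
  exact integral_nonneg fun a => mul_nonneg (hq a).le (klFun_nonneg (div_nonneg (hp a) (hq a).le))

lemma integral_mul_log_div_eq_zero_iff (hp : ∀ a, 0 ≤ p a) (hq : ∀ a, 0 < q a)
    (hp_int : Integrable p μ) (hq_int : Integrable q μ)
    (hpq : ∫ a, p a ∂μ = ∫ a, q a ∂μ)
    (hlog_int : Integrable (fun a => p a * log (p a / q a)) μ) :
    ∫ a, p a * log (p a / q a) ∂μ = 0 ↔ p =ᵐ[μ] q := by
  have hklFun_int : Integrable (fun a => q a * klFun (p a / q a)) μ :=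
    (hlog_int.sub (hp_int.sub hq_int)).congr
      (.of_forall fun a => (mul_klFun_div (hq a).ne').symm)
  rw [integral_mul_log_div_eq_integral_mul_klFun (fun a => (hq a).ne') hp_int hq_int hpq
      hlog_int,
    integral_eq_zero_iff_of_nonneg
      (fun a => mul_nonneg (hq a).le (klFun_nonneg (div_nonneg (hp a) (hq a).le))) hklFun_int]
  refine Filter.eventually_congr (.of_forall fun a => ?_)
  rw [Pi.zero_apply, mul_eq_zero, klFun_eq_zero_iff (div_nonneg (hp a) (hq a).le),
    div_eq_one_iff_eq (hq a).ne']
  simp [(hq a).ne']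

end Gibbs

lemma mul_mul_log_mul_div_mul (c t q s : ℝ) (hq : q ≠ 0) (hs : s ≠ 0) :
    c * t * log (c * t / (q * s)) = t * (c * log (c / q)) + c * (t * log (t / s)) := by
  rcases eq_or_ne c 0 with rfl | hc
  · simp
  rcases eq_or_ne t 0 with rfl | ht
  · simp
  rw [mul_div_mul_comm, log_mul (div_ne_zero hc hq) (div_ne_zero ht hs)]
  ring

lemma integral_mul_mul_log_mul_div_mul_s16 {β : Type*} [MeasurableSpace β] {ν : Measure β}
    {c q : β → ℝ} {t s : ℝ} (hq : ∀ b, q b ≠ 0) (hs : s ≠ 0) (hc : ∫ b, c b ∂ν = 1)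
    (hint : Integrable (fun b => c b * t * log (c b * t / (q b * s))) ν) :
    ∫ b, c b * t * log (c b * t / (q b * s)) ∂ν
      = t * ∫ b, c b * log (c b / q b) ∂ν + t * log (t / s) := by
  rcases eq_or_ne t 0 with rfl | ht
  · simp
  have hc_int : Integrable c ν := .of_integral_ne_zero (by simp [hc])
  have hsplit b := mul_mul_log_mul_div_mul (c b) t (q b) s (hq b) hs
  have hlog_int : Integrable (fun b => c b * log (c b / q b)) ν :=
    ((hint.sub (hc_int.mul_const (t * log (t / s)))).const_mul t⁻¹).congr
      (.of_forall fun b => by simp only [Pi.sub_apply, hsplit]; field_simp; ring)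
  simp_rw [hsplit]
  rw [integral_add (hlog_int.const_mul t) (hc_int.mul_const _), integral_const_mul,
    integral_mul_const, hc, one_mul]

lemma mul_log_div_mul_exp_neg_div (t s K z : ℝ) (hs : s ≠ 0) (hz : z ≠ 0) :
    t * log (t / (s * exp (-K) / z)) = t * K + t * log (t / s) + t * log z := by
  rcases eq_or_ne t 0 with rfl | ht
  · simp
  rw [log_div ht (div_ne_zero (mul_ne_zero hs (exp_ne_zero _)) hz),
    log_div (mul_ne_zero hs (exp_ne_zero _)) hz, log_mul hs (exp_ne_zero _), log_exp,
    log_div ht hs]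
  ring

theorem cva_pythagorean_general {A B : Type*} [MeasurableSpace A] [MeasurableSpace B]
    (μ : Measure A) (ν : Measure B) [SigmaFinite μ] [SigmaFinite ν]
    (f : A × B → ℝ) (fk : A → ℝ) (fc : A → B → ℝ) (ftc : A → B → ℝ)
    (hf_pos : ∀ x, 0 < f x) (hfk_pos : ∀ a, 0 < fk a)
    (hfc : ∀ a b, fc a b = f (a, b) / fk a)
    (hftc_int : ∀ a, ∫ b, ftc a b ∂ν = 1)
    (KLc : A → ℝ)
    (hKLc : ∀ a, KLc a = ∫ b, ftc a b * Real.log (ftc a b / fc a b) ∂ν)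
    (ζ : ℝ) (hζ : ζ = ∫ a, fk a * Real.exp (-(KLc a)) ∂μ) (hζ_pos : 0 < ζ)
    (ftkstar : A → ℝ)
    (hstar : ∀ a, ftkstar a = fk a * Real.exp (-(KLc a)) / ζ) :
    ∀ ftk : A → ℝ, (∀ a, 0 ≤ ftk a) → (∫ a, ftk a ∂μ = 1) →
      Integrable (fun x : A × B => ftc x.1 x.2 * ftk x.1 *
          Real.log (ftc x.1 x.2 * ftk x.1 / f x)) (μ.prod ν) →
      Integrable (fun a => ftk a * Real.log (ftk a / ftkstar a)) μ →
      ((∫ x : A × B, ftc x.1 x.2 * ftk x.1 *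
            Real.log (ftc x.1 x.2 * ftk x.1 / f x) ∂(μ.prod ν))
          = (∫ a, ftk a * Real.log (ftk a / ftkstar a) ∂μ)
            + Real.log (1 / ζ)) ∧
      Real.log (1 / ζ) ≤ ∫ x : A × B, ftc x.1 x.2 * ftk x.1 *
            Real.log (ftc x.1 x.2 * ftk x.1 / f x) ∂(μ.prod ν) ∧
      ((∫ x : A × B, ftc x.1 x.2 * ftk x.1 *
            Real.log (ftc x.1 x.2 * ftk x.1 / f x) ∂(μ.prod ν))
          = Real.log (1 / ζ) ↔ ftk =ᵐ[μ] ftkstar) := by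
  intro ftk hftk_nonneg hftk_int hjoint_int hmarg_int
  have hf a b : f (a, b) = fc a b * fk a := by rw [hfc, div_mul_cancel₀ _ (hfk_pos a).ne']
  have hfc_ne a b : fc a b ≠ 0 := by rw [hfc]; exact (div_pos (hf_pos _) (hfk_pos a)).ne'
  have hstar_pos a : 0 < ftkstar a := by
    rw [hstar]
    exact div_pos (mul_pos (hfk_pos a) (exp_pos _)) hζ_pos
  have hstar_int : ∫ a, ftkstar a ∂μ = 1 := by
    simp_rw [hstar, integral_div, ← hζ, div_self hζ_pos.ne']
  have hinner : ∀ᵐ a ∂μ, ∫ b, ftc a b * ftk a * log (ftc a b * ftk a / f (a, b)) ∂ν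
      = ftk a * log (ftk a / ftkstar a) - ftk a * log ζ := by
    filter_upwards [hjoint_int.prod_right_ae] with a ha
    simp_rw [hf a] at ha ⊢
    rw [integral_mul_mul_log_mul_div_mul_s16 (hfc_ne a) (hfk_pos a).ne' (hftc_int a) ha, ← hKLc,
      hstar, mul_log_div_mul_exp_neg_div _ _ _ _ (hfk_pos a).ne' hζ_pos.ne']
    ring
  have hftk_integrable : Integrable ftk μ := .of_integral_ne_zero (by simp [hftk_int])
  have hstar_integrable : Integrable ftkstar μ := .of_integral_ne_zero (by simp [hstar_int])
  have hpythagoras : ∫ x : A × B, ftc x.1 x.2 * ftk x.1 * log (ftc x.1 x.2 * ftk x.1 / f x)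
        ∂(μ.prod ν) = ∫ a, ftk a * log (ftk a / ftkstar a) ∂μ + log (1 / ζ) := by
    rw [integral_prod _ hjoint_int, integral_congr_ae hinner,
      integral_sub hmarg_int (hftk_integrable.mul_const _), integral_mul_const, hftk_int, one_div,
      log_inv]
    ring
  have hgibbs := integral_mul_log_div_nonneg hftk_nonneg hstar_pos
    hftk_integrable hstar_integrable (hftk_int.trans hstar_int.symm) hmarg_int
  have hgibbs_eq := integral_mul_log_div_eq_zero_iff hftk_nonneg hstar_pos
    hftk_integrable hstar_integrable (hftk_int.trans hstar_int.symm) hmarg_int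
  refine ⟨hpythagoras, ?_, ?_⟩
  · rw [hpythagoras]
    linarith
  · rw [hpythagoras, add_eq_right, hgibbs_eq]

/-- Pythagorean decomposition for CVA: with the conditional `f̃*(·|θ_k)` fixed
and `f̃*_k(θ_k) = f_k(θ_k) exp(−KL(f̃*(·|θ_k)‖f(·|θ_k))) / ζ_k`, every free
marginal `f̃_k` satisfies
`KL(f̃*(·|·) f̃_k ‖ f) = KL(f̃_k ‖ f̃*_k) + log(1/ζ_k)`; in particular the KL
divergence is at least `log(1/ζ_k)`, with equality iff `f̃_k = f̃*_k` (a.e.). -/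
theorem cva_pythagorean {A B : Type*} [MeasurableSpace A] [MeasurableSpace B]
    (μ : Measure A) (ν : Measure B) [SigmaFinite μ] [SigmaFinite ν]
    (f : A × B → ℝ) (fk : A → ℝ) (fc : A → B → ℝ) (ftc : A → B → ℝ)
    (hf_pos : ∀ x, 0 < f x) (hfk_pos : ∀ a, 0 < fk a)
    (hfk : ∀ a, fk a = ∫ b, f (a, b) ∂ν)
    (hfc : ∀ a b, fc a b = f (a, b) / fk a)
    (hftc_pos : ∀ a b, 0 < ftc a b) (hftc_int : ∀ a, ∫ b, ftc a b ∂ν = 1)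
    (KLc : A → ℝ)
    (hKLc : ∀ a, KLc a = ∫ b, ftc a b * Real.log (ftc a b / fc a b) ∂ν)
    (ζ : ℝ) (hζ : ζ = ∫ a, fk a * Real.exp (-(KLc a)) ∂μ) (hζ_pos : 0 < ζ)
    (ftkstar : A → ℝ)
    (hstar : ∀ a, ftkstar a = fk a * Real.exp (-(KLc a)) / ζ) :
    ∀ ftk : A → ℝ, (∀ a, 0 ≤ ftk a) → (∫ a, ftk a ∂μ = 1) →
      Integrable (fun x : A × B => ftc x.1 x.2 * ftk x.1 *
          Real.log (ftc x.1 x.2 * ftk x.1 / f x)) (μ.prod ν) →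
      Integrable (fun a => ftk a * Real.log (ftk a / ftkstar a)) μ →
      ((∫ x : A × B, ftc x.1 x.2 * ftk x.1 *
            Real.log (ftc x.1 x.2 * ftk x.1 / f x) ∂(μ.prod ν))
          = (∫ a, ftk a * Real.log (ftk a / ftkstar a) ∂μ)
            + Real.log (1 / ζ)) ∧
      Real.log (1 / ζ) ≤ ∫ x : A × B, ftc x.1 x.2 * ftk x.1 *
            Real.log (ftc x.1 x.2 * ftk x.1 / f x) ∂(μ.prod ν) ∧
      ((∫ x : A × B, ftc x.1 x.2 * ftk x.1 *
            Real.log (ftc x.1 x.2 * ftk x.1 / f x) ∂(μ.prod ν))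
          = Real.log (1 / ζ) ↔ ftk =ᵐ[μ] ftkstar) :=
  cva_pythagorean_general μ ν f fk fc ftc hf_pos hfk_pos hfc hftc_int KLc hKLc ζ hζ hζ_pos ftkstar
    hstar
end
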